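/- arXiv:2404.00688 — 3 statements merged into one kernel-verified Lean document; each statement's English description precedes it below -/
import Mathlib

section
/- Let P be a d×d real orthogonal projection matrix, P⊥ = I − P, λ₁, λ₂ > 0, D ∈ ℝ^{k×d}, θ*, θ̄ ∈ ℝ^d, ε ∈ ℝ^k, y = Dθ* + ε, B = DᵀD + λ₁·P⊥ + λ₂·P, and θ̂ = B⁻¹(Dᵀy + λ₁·P⊥θ̄). Then ‖θ̂ − θ*‖_B ≤ ‖Dᵀε‖_{B⁻¹} + λ₁·‖P⊥(θ̄ − θ*)‖_{B⁻¹} + λ₂·‖Pθ*‖_{B⁻¹}, where ‖x‖_A = √(xᵀAx) denotes the weighted norm for a positive definite matrix A. -/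
/-!
With `y = Dθ* + ε`, the estimator error is `θ̂ - θ* = B⁻¹ w` for
`w = Dᵀε + λ₁ P⊥ (θ̄ - θ*) - λ₂ P θ*`, and `‖B⁻¹ w‖_B = ‖w‖_{B⁻¹}`. The matrix `B` is positive
definite, since `λ₁ P⊥ + λ₂ P` is positive semidefinite with inverse `λ₁⁻¹ P⊥ + λ₂⁻¹ P`; hence
`‖·‖_{B⁻¹}` is a seminorm and the triangle inequality splits `‖w‖_{B⁻¹}` into the three terms.
-/

open Matrix
open scoped MatrixOrder

namespace Matrix

variable {n : Type*} [Fintype n]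

noncomputable def weightedNorm (A : Matrix n n ℝ) (x : n → ℝ) : ℝ := √(x ⬝ᵥ (A *ᵥ x))

theorem weightedNorm_smul (A : Matrix n n ℝ) (c : ℝ) (x : n → ℝ) :
    weightedNorm A (c • x) = |c| * weightedNorm A x := by
  rw [weightedNorm, weightedNorm, mulVec_smul, smul_dotProduct, dotProduct_smul, smul_eq_mul,
    smul_eq_mul, ← mul_assoc, ← sq, Real.sqrt_mul (sq_nonneg c), Real.sqrt_sq_eq_abs]

theorem PosSemidef.weightedNorm_add_le {A : Matrix n n ℝ} (hA : A.PosSemidef) (x y : n → ℝ) :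
    weightedNorm A (x + y) ≤ weightedNorm A x + weightedNorm A y := by
  have hnorm (v : n → ℝ) :
      @norm _ (A.toSeminormedAddCommGroup hA).toNorm v = weightedNorm A v := by
    rw [weightedNorm, dotProduct_comm]; rfl
  simpa only [hnorm] using @norm_add_le _ (A.toSeminormedAddCommGroup hA).toSeminormedAddGroup x y

theorem weightedNorm_inv_mulVec [DecidableEq n] {A : Matrix n n ℝ} (hA : IsUnit A.det)
    (x : n → ℝ) : weightedNorm A (A⁻¹ *ᵥ x) = weightedNorm A⁻¹ x := by
  rw [weightedNorm, weightedNorm, mulVec_mulVec, mul_nonsing_inv _ hA, one_mulVec,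
    dotProduct_comm]

theorem _root_.IsStarProjection.posDef_smul_one_sub_add_smul [DecidableEq n] {P : Matrix n n ℝ}
    (hP : IsStarProjection P) {a b : ℝ} (ha : 0 < a) (hb : 0 < b) :
    (a • (1 - P) + b • P).PosDef := by
  have hpsd : (a • (1 - P) + b • P).PosSemidef :=
    (hP.one_sub.nonneg.posSemidef.smul ha.le).add (hP.nonneg.posSemidef.smul hb.le)
  refine hpsd.posDef_iff_isUnit.mpr (IsUnit.of_mul_eq_one (a⁻¹ • (1 - P) + b⁻¹ • P) ?_)
  simp only [add_mul, mul_add, smul_mul_smul_comm, hP.one_sub.isIdempotentElem.eq,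
    hP.isIdempotentElem.eq, hP.mul_one_sub_self, hP.one_sub_mul_self, smul_zero,
    mul_inv_cancel₀ ha.ne', mul_inv_cancel₀ hb.ne', one_smul, add_zero, zero_add, sub_add_cancel]

end Matrix

/-- Triangle-inequality decomposition of the confidence-set bound:
‖θ̂ − θ*‖_B ≤ ‖Dᵀε‖_{B⁻¹} + λ₁‖P⊥(θ̄ − θ*)‖_{B⁻¹} + λ₂‖Pθ*‖_{B⁻¹}. -/
theorem confidence_triangle_decomposition (d k : ℕ)
    (P : Matrix (Fin d) (Fin d) ℝ) (hsymm : Pᵀ = P) (hidem : P * P = P)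
    (l1 l2 : ℝ) (hl1 : 0 < l1) (hl2 : 0 < l2)
    (D : Matrix (Fin k) (Fin d) ℝ) (θstar θbar : Fin d → ℝ) (ε : Fin k → ℝ)
    (y : Fin k → ℝ) (hy : y = D *ᵥ θstar + ε)
    (B : Matrix (Fin d) (Fin d) ℝ)
    (hB : B = Dᵀ * D + l1 • ((1 : Matrix (Fin d) (Fin d) ℝ) - P) + l2 • P)
    (θhat : Fin d → ℝ)
    (hθhat : θhat = B⁻¹ *ᵥ (Dᵀ *ᵥ y + l1 • (((1 : Matrix (Fin d) (Fin d) ℝ) - P) *ᵥ θbar))) :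
    Real.sqrt ((θhat - θstar) ⬝ᵥ (B *ᵥ (θhat - θstar)))
      ≤ Real.sqrt ((Dᵀ *ᵥ ε) ⬝ᵥ (B⁻¹ *ᵥ (Dᵀ *ᵥ ε)))
        + l1 * Real.sqrt ((((1 : Matrix (Fin d) (Fin d) ℝ) - P) *ᵥ (θbar - θstar)) ⬝ᵥ
            (B⁻¹ *ᵥ (((1 : Matrix (Fin d) (Fin d) ℝ) - P) *ᵥ (θbar - θstar))))
        + l2 * Real.sqrt ((P *ᵥ θstar) ⬝ᵥ (B⁻¹ *ᵥ (P *ᵥ θstar))) := by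
  have hP : IsStarProjection P := ⟨hidem, by rw [IsSelfAdjoint, star_eq_conjTranspose,
    conjTranspose_eq_transpose_of_trivial, hsymm]⟩
  have hBpd : B.PosDef := by
    rw [hB, add_assoc, ← conjTranspose_eq_transpose_of_trivial]
    exact PosDef.posSemidef_add (posSemidef_conjTranspose_mul_self D)
      (hP.posDef_smul_one_sub_add_smul hl1 hl2)
  have hdet : IsUnit B.det := (isUnit_iff_isUnit_det B).mp hBpd.isUnit
  set w := Dᵀ *ᵥ ε + l1 • ((1 - P) *ᵥ (θbar - θstar)) + (-l2) • (P *ᵥ θstar)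
  have hres : θhat - θstar = B⁻¹ *ᵥ w := by
    have hBw : B *ᵥ θstar + w = Dᵀ *ᵥ y + l1 • ((1 - P) *ᵥ θbar) := by
      rw [hy, hB]
      simp only [w, add_mulVec, smul_mulVec, ← mulVec_mulVec, mulVec_add, mulVec_sub, sub_mulVec,
        one_mulVec, smul_sub, neg_smul]
      abel
    rw [hθhat, ← hBw, mulVec_add, mulVec_mulVec, nonsing_inv_mul _ hdet, one_mulVec,
      add_sub_cancel_left]
  show weightedNorm B (θhat - θstar) ≤ weightedNorm B⁻¹ (Dᵀ *ᵥ ε)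
    + l1 * weightedNorm B⁻¹ ((1 - P) *ᵥ (θbar - θstar)) + l2 * weightedNorm B⁻¹ (P *ᵥ θstar)
  have hBinv : B⁻¹.PosSemidef := hBpd.inv.posSemidef
  calc weightedNorm B (θhat - θstar) = weightedNorm B⁻¹ w := by
        rw [hres, weightedNorm_inv_mulVec hdet]
    _ ≤ weightedNorm B⁻¹ (Dᵀ *ᵥ ε) + weightedNorm B⁻¹ (l1 • ((1 - P) *ᵥ (θbar - θstar)))
        + weightedNorm B⁻¹ ((-l2) • (P *ᵥ θstar)) := by
      grw [hBinv.weightedNorm_add_le, hBinv.weightedNorm_add_le]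
    _ = _ := by
      rw [weightedNorm_smul, weightedNorm_smul, abs_neg, abs_of_pos hl1, abs_of_pos hl2]
end

section
/- Let P be a d×d real orthogonal projection matrix of rank p with 1 ≤ p ≤ d−1, P⊥ = I − P, q = d − p, and λ₁, λ₂ ≥ 1. Let x₁,…,x_n ∈ ℝ^d with ‖x_k‖ ≤ 1 for all k, and define B₀ = λ₁·P⊥ + λ₂·P and B_k = B_{k−1} + x_k x_kᵀ. Then ∑_{k=1}^n ‖x_k‖²_{B_{k−1}⁻¹} ≤ 2·( p·log(1 + n/(p·λ₂)) + q·log(1 + n/(q·λ₁)) ). -/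
/-!
The matrix determinant lemma gives `det B_{k+1} = det B_k * (1 + t_k)` with
`t_k = ‖x_{k+1}‖²_{B_k⁻¹}`, and `B_k ≥ 1` forces `t_k ≤ ‖x_{k+1}‖² ≤ 1`, where `t ≤ 2 log (1 + t)`;
so the sum telescopes to at most `2 log (det B_n / det B_0)`. Here `det B_0 = λ₂ ^ p * λ₁ ^ q`,
and `log det M ≤ tr M - d` (AM–GM on the eigenvalues), applied to `M = R B_n R` with
`R = a^(-1/2) P + b^(-1/2) P⊥`, gives `det B_n ≤ a ^ p * b ^ q` for `a = λ₂ + n / p`,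
`b = λ₁ + n / q`, because each rank-one update adds at most `1` to `tr (B P)` and to `tr (B P⊥)`.
-/

open Matrix

theorem IsIdempotentElem.smul_add_smul_one_sub_mul {R A : Type*} [CommSemiring R] [Ring A]
    [Algebra R A] {e : A} (he : IsIdempotentElem e) (a b c d : R) :
    (a • e + b • (1 - e)) * (c • e + d • (1 - e)) = (a * c) • e + (b * d) • (1 - e) := by
  have h1 : e * (1 - e) = 0 := by rw [mul_sub, mul_one, he.eq, sub_self]
  have h2 : (1 - e) * e = 0 := by rw [sub_mul, one_mul, he.eq, sub_self]
  simp only [add_mul, mul_add, smul_mul_assoc, mul_smul_comm, he.eq, h1, h2, he.one_sub.eq,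
    smul_zero, add_zero, zero_add, smul_smul, mul_comm c a, mul_comm d b]

theorem le_two_mul_log_one_add {t : ℝ} (h0 : 0 ≤ t) (h2 : t ≤ 2) : t ≤ 2 * Real.log (1 + t) := by
  have := Real.le_log_one_add_of_nonneg h0
  rw [div_le_iff₀ (by linarith)] at this
  nlinarith

namespace Matrix

section Field

variable {K n : Type*} [Field K] [Fintype n] [DecidableEq n] {P : Matrix n n K}

theorem isProj_range_toLin' (hP : IsIdempotentElem P) :
    LinearMap.IsProj (LinearMap.range P.toLin') P.toLin' :=
  (LinearMap.isProj_range_iff_isIdempotentElem _).mpr (hP.map toLinAlgEquiv')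

theorem trace_eq_rank_of_isIdempotentElem (hP : IsIdempotentElem P) : P.trace = P.rank := by
  rw [← trace_toLin'_eq, (isProj_range_toLin' hP).trace]
  rfl

theorem det_smul_add_smul_one_sub_of_isIdempotentElem (hP : IsIdempotentElem P) (a b : K) :
    (a • P + b • (1 - P)).det = a ^ P.rank * b ^ (Fintype.card n - P.rank) := by
  have hf := isProj_range_toLin' hP
  let e := (LinearMap.range P.toLin').prodEquivOfIsCompl (LinearMap.ker P.toLin') hf.isCompl
  have hc : e.conj (LinearMap.prodMap LinearMap.id 0) = P.toLin' := hf.eq_conj_prodMap.symm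
  have key : e.conj (LinearMap.prodMap (a • LinearMap.id : LinearMap.range P.toLin' →ₗ[K] _)
      (b • LinearMap.id : LinearMap.ker P.toLin' →ₗ[K] _)) = toLin' ((a - b) • P + b • 1) := by
    have hprod : LinearMap.prodMap (a • LinearMap.id : LinearMap.range P.toLin' →ₗ[K] _)
        (b • LinearMap.id : LinearMap.ker P.toLin' →ₗ[K] _) =
        (a - b) • LinearMap.prodMap LinearMap.id 0 + b • LinearMap.id := by
      ext <;> simp [sub_mul]
    rw [hprod, map_add, map_smul, map_smul, LinearEquiv.conj_id, hc, map_add, map_smul,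
      map_smul, toLin'_one]
  have hker : Module.finrank K (LinearMap.ker P.toLin') = Fintype.card n - P.rank := by
    have := LinearMap.finrank_range_add_finrank_ker P.toLin'
    rw [Module.finrank_fintype_fun_eq_card] at this
    exact Nat.eq_sub_of_add_eq' this
  rw [show a • P + b • (1 - P) = (a - b) • P + b • 1 by module, ← LinearMap.det_toLin', ← key,
    LinearEquiv.conj_apply, LinearMap.comp_assoc, LinearMap.det_conj, LinearMap.det_prodMap,
    LinearMap.det_smul, LinearMap.det_smul, LinearMap.det_id, LinearMap.det_id, mul_one, mul_one,
    hker]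
  rfl

end Field

variable {n : Type*}

theorem posDef_of_posSemidef_sub_one [DecidableEq n] {B : Matrix n n ℝ}
    (h : (B - 1).PosSemidef) : B.PosDef := by
  simpa using PosDef.posSemidef_add h PosDef.one

variable [Fintype n]

theorem trace_vecMulVec_mul {R : Type*} [CommSemiring R] (u v : n → R) (P : Matrix n n R) :
    (vecMulVec u v * P).trace = v ⬝ᵥ (P *ᵥ u) := by
  rw [trace_mul_comm, mul_vecMulVec, trace_vecMulVec, dotProduct_comm]

theorem IsStarProjection.posSemidef {P : Matrix n n ℝ} (hP : IsStarProjection P) :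
    P.PosSemidef := by
  simpa only [← star_eq_conjTranspose, hP.isSelfAdjoint.star_eq, hP.isIdempotentElem.eq] using
    posSemidef_conjTranspose_mul_self P

variable [DecidableEq n]

theorem IsStarProjection.dotProduct_mulVec_le_dotProduct_self {P : Matrix n n ℝ}
    (hP : IsStarProjection P) (v : n → ℝ) : v ⬝ᵥ (P *ᵥ v) ≤ v ⬝ᵥ v := by
  have := hP.one_sub.posSemidef.dotProduct_mulVec_nonneg v
  rw [star_trivial, sub_mulVec, one_mulVec, dotProduct_sub] at this
  linarith

theorem IsStarProjection.trace_mul_le_of_add_vecMulVec {P : Matrix n n ℝ} (hP : IsStarProjection P)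
    {B : ℕ → Matrix n n ℝ} {x : ℕ → n → ℝ} (hB : ∀ k, B (k + 1) = B k + vecMulVec (x k) (x k))
    (hx : ∀ k, x k ⬝ᵥ x k ≤ 1) (N : ℕ) :
    (B N * P).trace ≤ (B 0 * P).trace + N := by
  induction N with
  | zero => simp
  | succ N ih =>
    rw [hB, Matrix.add_mul, trace_add, trace_vecMulVec_mul, Nat.cast_succ]
    linarith [(hP.dotProduct_mulVec_le_dotProduct_self (x N)).trans (hx N)]

theorem det_add_vecMulVec_self {R : Type*} [CommRing R] {A : Matrix n n R} (hA : IsUnit A.det)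
    (v : n → R) : (A + vecMulVec v v).det = A.det * (1 + v ⬝ᵥ (A⁻¹ *ᵥ v)) := by
  have : A + vecMulVec v v = A * (1 + vecMulVec (A⁻¹ *ᵥ v) v) := by
    rw [Matrix.mul_add, Matrix.mul_one, mul_vecMulVec, mulVec_mulVec, mul_nonsing_inv _ hA,
      one_mulVec]
  rw [this, det_mul, vecMulVec_eq Unit, det_one_add_replicateCol_mul_replicateRow]

theorem posSemidef_sub_one_of_add_vecMulVec {B : ℕ → Matrix n n ℝ} {x : ℕ → n → ℝ}
    (hB0 : (B 0 - 1).PosSemidef) (hB : ∀ k, B (k + 1) = B k + vecMulVec (x k) (x k)) (k : ℕ) :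
    (B k - 1).PosSemidef := by
  induction k with
  | zero => exact hB0
  | succ k ih =>
    rw [hB, add_sub_right_comm]
    simpa using ih.add (posSemidef_vecMulVec_self_star (x k))

theorem dotProduct_inv_mulVec_le_dotProduct_self {B : Matrix n n ℝ} (h : (B - 1).PosSemidef)
    (v : n → ℝ) : v ⬝ᵥ (B⁻¹ *ᵥ v) ≤ v ⬝ᵥ v := by
  set y := B⁻¹ *ᵥ v
  have hBy : B *ᵥ y = v := by
    rw [mulVec_mulVec, mul_nonsing_inv _ (posDef_of_posSemidef_sub_one h).det_pos.ne'.isUnit,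
      one_mulVec]
  have hyy : y ⬝ᵥ y ≤ v ⬝ᵥ y := by
    have := h.dotProduct_mulVec_nonneg y
    rw [star_trivial, sub_mulVec, one_mulVec, dotProduct_sub, hBy, dotProduct_comm y v] at this
    linarith
  -- with `y ⬝ᵥ y ≤ v ⬝ᵥ y`, expanding `‖v - y‖² ≥ 0` gives `v ⬝ᵥ y ≤ v ⬝ᵥ v`
  have hsq : 0 ≤ (v - y) ⬝ᵥ (v - y) := dotProduct_self_star_nonneg _
  simp only [sub_dotProduct, dotProduct_sub, dotProduct_comm y v] at hsq
  linarith

theorem sum_dotProduct_inv_mulVec_le_two_mul_log_det {B : ℕ → Matrix n n ℝ} {x : ℕ → n → ℝ}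
    (hB0 : (B 0 - 1).PosSemidef) (hB : ∀ k, B (k + 1) = B k + vecMulVec (x k) (x k))
    (hx : ∀ k, x k ⬝ᵥ x k ≤ 1) (N : ℕ) :
    ∑ k ∈ Finset.range N, x k ⬝ᵥ ((B k)⁻¹ *ᵥ x k) ≤
      2 * (Real.log (B N).det - Real.log (B 0).det) := by
  rw [← Finset.sum_range_sub (fun k => Real.log (B k).det), Finset.mul_sum]
  refine Finset.sum_le_sum fun k _ => ?_
  have hBk := posSemidef_sub_one_of_add_vecMulVec hB0 hB k
  have hdet := (posDef_of_posSemidef_sub_one hBk).det_pos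
  have ht0 : 0 ≤ x k ⬝ᵥ ((B k)⁻¹ *ᵥ x k) := by
    simpa using (posDef_of_posSemidef_sub_one hBk).inv.posSemidef.dotProduct_mulVec_nonneg (x k)
  have ht1 := (dotProduct_inv_mulVec_le_dotProduct_self hBk (x k)).trans (hx k)
  rw [hB, det_add_vecMulVec_self hdet.ne'.isUnit, Real.log_mul hdet.ne' (by positivity),
    add_sub_cancel_left]
  exact le_two_mul_log_one_add ht0 (by linarith)

theorem PosDef.log_det_le_trace_sub_card {M : Matrix n n ℝ} (hM : M.PosDef) :
    Real.log M.det ≤ M.trace - Fintype.card n := by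
  have hH := hM.isHermitian
  have hev := hM.eigenvalues_pos
  rw [hH.det_eq_prod_eigenvalues, hH.trace_eq_sum_eigenvalues]
  simp only [RCLike.ofReal_real_eq_id, id]
  rw [Real.log_prod fun i _ => (hev i).ne', ← Finset.card_univ, ← nsmul_one, ← Finset.sum_const,
    ← Finset.sum_sub_distrib]
  exact Finset.sum_le_sum fun i _ => Real.log_le_sub_one_of_pos (hev i)

theorem PosDef.log_det_le_trace_mul_sub_card {M R : Matrix n n ℝ} (hM : M.PosDef)
    (hR : IsUnit R.det) :
    Real.log M.det ≤ (M * (R * Rᴴ)).trace - Fintype.card n - Real.log (R.det ^ 2) := by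
  have hRMR : (Rᴴ * M * R).PosDef :=
    hM.conjTranspose_mul_mul_same <|
      mulVec_injective_iff_isUnit.mpr ((isUnit_iff_isUnit_det R).mpr hR)
  have hdet : (Rᴴ * M * R).det = R.det ^ 2 * M.det := by
    rw [det_mul, det_mul, det_conjTranspose, star_trivial]; ring
  have htr : (Rᴴ * M * R).trace = (M * (R * Rᴴ)).trace := by
    rw [trace_mul_cycle, trace_mul_comm]
  have h := hRMR.log_det_le_trace_sub_card
  rw [hdet, htr, Real.log_mul (pow_ne_zero 2 hR.ne_zero) hM.det_pos.ne'] at h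
  linarith

theorem PosDef.log_det_le_of_isStarProjection {M P : Matrix n n ℝ} (hM : M.PosDef)
    (hP : IsStarProjection P) {a b : ℝ} (ha : 0 < a) (hb : 0 < b) :
    Real.log M.det ≤ P.rank * Real.log a + (Fintype.card n - P.rank : ℕ) * Real.log b +
      (M * P).trace / a + (M * (1 - P)).trace / b - Fintype.card n := by
  set R := (√a)⁻¹ • P + (√b)⁻¹ • (1 - P)
  have hRR : R * Rᴴ = a⁻¹ • P + b⁻¹ • (1 - P) := by
    have hRh : Rᴴ = R := (((IsSelfAdjoint.all _).smul hP.isSelfAdjoint).add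
      ((IsSelfAdjoint.all _).smul hP.one_sub.isSelfAdjoint)).star_eq
    rw [hRh, hP.isIdempotentElem.smul_add_smul_one_sub_mul, ← mul_inv, ← mul_inv,
      Real.mul_self_sqrt ha.le, Real.mul_self_sqrt hb.le]
  have hdetR : R.det ^ 2 = (a ^ P.rank)⁻¹ * (b ^ (Fintype.card n - P.rank))⁻¹ := by
    rw [det_smul_add_smul_one_sub_of_isIdempotentElem hP.isIdempotentElem, mul_pow, ← pow_mul,
      ← pow_mul, mul_comm _ 2, mul_comm _ 2, pow_mul, pow_mul]
    simp only [inv_pow, Real.sq_sqrt ha.le, Real.sq_sqrt hb.le]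
  have h := hM.log_det_le_trace_mul_sub_card (R := R) (by
    rw [isUnit_iff_ne_zero, ← pow_ne_zero_iff two_ne_zero, hdetR]; positivity)
  rw [hRR, Matrix.mul_add, trace_add, Matrix.mul_smul, Matrix.mul_smul, trace_smul, trace_smul,
    hdetR, Real.log_mul (by positivity) (by positivity), Real.log_inv, Real.log_inv, Real.log_pow,
    Real.log_pow, smul_eq_mul, smul_eq_mul] at h
  rw [div_eq_inv_mul, div_eq_inv_mul]
  linarith

theorem IsStarProjection.log_det_sub_log_det_le {P : Matrix n n ℝ} (hP : IsStarProjection P)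
    (hp : 0 < P.rank) (hq : P.rank < Fintype.card n) {B : ℕ → Matrix n n ℝ} {x : ℕ → n → ℝ}
    {l₁ l₂ : ℝ} (hl₁ : 0 < l₁) (hl₂ : 0 < l₂) (hB0 : B 0 = l₂ • P + l₁ • (1 - P))
    (hB : ∀ k, B (k + 1) = B k + vecMulVec (x k) (x k)) (hx : ∀ k, x k ⬝ᵥ x k ≤ 1) (N : ℕ)
    (hBN : (B N).PosDef) :
    Real.log (B N).det - Real.log (B 0).det ≤
      P.rank * Real.log (1 + N / (P.rank * l₂)) +
        (Fintype.card n - P.rank : ℕ) *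
          Real.log (1 + N / ((Fintype.card n - P.rank : ℕ) * l₁)) := by
  set p : ℝ := (P.rank : ℝ)
  set q : ℝ := ((Fintype.card n - P.rank : ℕ) : ℝ)
  have hp0 : 0 < p := by positivity
  have hq0 : 0 < q := by simp only [q]; exact_mod_cast Nat.sub_pos_of_lt hq
  have hpq : p + q = Fintype.card n := by simp only [p, q]; rw [Nat.cast_sub hq.le]; ring
  have htrP : (B 0 * P).trace = l₂ * p := by
    have := hP.isIdempotentElem.smul_add_smul_one_sub_mul l₂ l₁ (1 : ℝ) 0
    simp only [one_smul, zero_smul, add_zero, mul_one, mul_zero] at this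
    rw [hB0, this, trace_smul, trace_eq_rank_of_isIdempotentElem hP.isIdempotentElem, smul_eq_mul]
  have htrQ : (B 0 * (1 - P)).trace = l₁ * q := by
    have := hP.isIdempotentElem.smul_add_smul_one_sub_mul l₂ l₁ (0 : ℝ) 1
    simp only [one_smul, zero_smul, zero_add, mul_one, mul_zero] at this
    rw [hB0, this, trace_smul, trace_sub, trace_one,
      trace_eq_rank_of_isIdempotentElem hP.isIdempotentElem, smul_eq_mul, ← hpq]
    ring
  set a := l₂ + N / p
  set b := l₁ + N / q
  have ha : 0 < a := by positivity
  have hb : 0 < b := by positivity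
  have hPN : (B N * P).trace / a ≤ p := by
    rw [div_le_iff₀ ha, show p * a = l₂ * p + N by simp only [a]; field_simp, ← htrP]
    exact hP.trace_mul_le_of_add_vecMulVec hB hx N
  have hQN : (B N * (1 - P)).trace / b ≤ q := by
    rw [div_le_iff₀ hb, show q * b = l₁ * q + N by simp only [b]; field_simp, ← htrQ]
    exact hP.one_sub.trace_mul_le_of_add_vecMulVec hB hx N
  have hlogN := hBN.log_det_le_of_isStarProjection hP ha hb
  have hlog0 : Real.log (B 0).det = p * Real.log l₂ + q * Real.log l₁ := by
    rw [hB0, det_smul_add_smul_one_sub_of_isIdempotentElem hP.isIdempotentElem,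
      Real.log_mul (by positivity) (by positivity), Real.log_pow, Real.log_pow]
  have hla : Real.log (1 + N / (p * l₂)) = Real.log a - Real.log l₂ := by
    rw [← Real.log_div ha.ne' hl₂.ne']; congr 1; simp only [a]; field_simp
  have hlb : Real.log (1 + N / (q * l₁)) = Real.log b - Real.log l₁ := by
    rw [← Real.log_div hb.ne' hl₁.ne']; congr 1; simp only [b]; field_simp
  rw [hla, hlb, hlog0]
  linarith

end Matrix

/-- Elliptical potential bound: ∑_{k=1}^n ‖x_k‖²_{B_{k−1}⁻¹} ≤ 2·S_n^{λ₁,λ₂}. -/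
theorem elliptical_potential_bound (d p n : ℕ) (hp1 : 1 ≤ p) (hpd : p ≤ d - 1)
    (P : Matrix (Fin d) (Fin d) ℝ) (hsymm : Pᵀ = P) (hidem : P * P = P)
    (hrank : P.rank = p)
    (l1 l2 : ℝ) (hl1 : 1 ≤ l1) (hl2 : 1 ≤ l2)
    (x : ℕ → Fin d → ℝ) (hx : ∀ k, Real.sqrt (x k ⬝ᵥ x k) ≤ 1)
    (B : ℕ → Matrix (Fin d) (Fin d) ℝ)
    (hB0 : B 0 = l1 • ((1 : Matrix (Fin d) (Fin d) ℝ) - P) + l2 • P)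
    (hBs : ∀ k : ℕ, B (k + 1) = B k + vecMulVec (x (k + 1)) (x (k + 1))) :
    ∑ k ∈ Finset.range n, (x (k + 1) ⬝ᵥ ((B k)⁻¹ *ᵥ x (k + 1)))
      ≤ 2 * ((p : ℝ) * Real.log (1 + (n : ℝ) / ((p : ℝ) * l2))
        + ((d - p : ℕ) : ℝ) * Real.log (1 + (n : ℝ) / (((d - p : ℕ) : ℝ) * l1))) := by
  have hP : IsStarProjection P :=
    ⟨hidem, by
      rw [IsSelfAdjoint, star_eq_conjTranspose, conjTranspose_eq_transpose_of_trivial, hsymm]⟩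
  have hxx : ∀ k, x (k + 1) ⬝ᵥ x (k + 1) ≤ 1 := fun k => Real.sqrt_le_one.mp (hx (k + 1))
  have hB0' : B 0 = l2 • P + l1 • (1 - P) := by rw [hB0, add_comm]
  have hB0psd : (B 0 - 1).PosSemidef := by
    rw [hB0', show l2 • P + l1 • (1 - P) - 1 = (l2 - 1) • P + (l1 - 1) • (1 - P) by module]
    exact (hP.posSemidef.smul (by linarith)).add (hP.one_sub.posSemidef.smul (by linarith))
  have hBn := posDef_of_posSemidef_sub_one (posSemidef_sub_one_of_add_vecMulVec hB0psd hBs n)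
  have hdet := hP.log_det_sub_log_det_le (by omega) (by rw [hrank, Fintype.card_fin]; omega)
    (by linarith) (by linarith) hB0' hBs hxx n hBn
  rw [hrank, Fintype.card_fin] at hdet
  linarith [sum_dotProduct_inv_mulVec_le_two_mul_log_det hB0psd hBs hxx n]
end

section
/- Let P be a d×d real orthogonal projection matrix of rank p with 1 ≤ p ≤ d−1, P⊥ = I − P, q = d − p, λ₁, λ₂ ≥ 1, γ ≥ 0, and θ* ∈ ℝ^d. For each round k = 1,…,n let A_k be a finite nonempty set of arms with contexts x_a ∈ ℝ^d satisfying ‖x_a‖ ≤ 1, let B₀ = λ₁·P⊥ + λ₂·P and B_k = B_{k−1} + x_{a_k} x_{a_k}ᵀ where a_k ∈ A_k is the chosen arm, and let θ̂_{k−1} ∈ ℝ^d. Suppose that at each round k: (i) |x_aᵀ(θ̂_{k−1} − θ*)| ≤ γ·‖x_a‖_{B_{k−1}⁻¹} for all a ∈ A_k, and (ii) a_k maximizes UCB(a) = x_aᵀθ̂_{k−1} + γ·‖x_a‖_{B_{k−1}⁻¹} over A_k. Then, with a_k* maximizing x_aᵀθ* over A_k, the cumulative pseudo-regret satisfies ∑_{k=1}^n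 (x_{a_k*} − x_{a_k})ᵀθ* ≤ 2γ·√( 2n·( p·log(1 + n/(p·λ₂)) + q·log(1 + n/(q·λ₁)) ) ). -/
/-!
Optimism makes the regret of round `k` at most `2γ‖x_{a_k}‖_{B_{k-1}⁻¹}`, and Cauchy–Schwarz
reduces the sum of these widths to `∑ ‖x_{a_k}‖²_{B_{k-1}⁻¹}`. By the matrix determinant lemma each
rank-one update multiplies `det B` by `1 + ‖x_{a_k}‖²_{B_{k-1}⁻¹}`; since `B_k ⪰ I` and
`‖x‖ ≤ 1` these terms are at most `1`, where `s ≤ 2 log (1 + s)`, so the sum is at most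
`2 log (det B_n / det B_0)` (elliptical potential). In an eigenbasis of `P`, `B_0` is diagonal with
`p` entries `λ₂` and `q` entries `λ₁`, and Hadamard's inequality followed by AM-GM on each of the
two blocks bounds `det B_n / det B_0` using only `tr (B_n - B_0) ≤ n`.
-/

open Matrix Finset
open scoped MatrixOrder

theorem Real.prod_le_sum_div_card_pow {ι : Type*} (s : Finset ι) {z : ι → ℝ}
    (hz : ∀ i ∈ s, 0 ≤ z i) : ∏ i ∈ s, z i ≤ ((∑ i ∈ s, z i) / #s) ^ #s := by
  rcases s.eq_empty_or_nonempty with rfl | hs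
  · simp
  have hk : (#s : ℝ) ≠ 0 := by simpa using hs.ne_empty
  have hamgm := Real.geom_mean_le_arith_mean_weighted s (fun _ => (#s : ℝ)⁻¹) z
    (fun _ _ => by positivity) (by simp [hk]) hz
  rw [Real.finsetProd_rpow s z hz, ← Finset.mul_sum, inv_mul_eq_div] at hamgm
  calc ∏ i ∈ s, z i = ((∏ i ∈ s, z i) ^ (#s : ℝ)⁻¹) ^ #s :=
        (Real.rpow_inv_natCast_pow (prod_nonneg hz) (by simpa using hk)).symm
    _ ≤ ((∑ i ∈ s, z i) / #s) ^ #s := by gcongr; exact Real.rpow_nonneg (prod_nonneg hz) _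

theorem Real.prod_add_le_pow_mul_one_add_div_pow {ι : Type*} (s : Finset ι) {c t : ℝ}
    (hc : 0 < c) {m : ι → ℝ} (hm : ∀ i ∈ s, 0 ≤ m i) (ht : ∑ i ∈ s, m i ≤ t) :
    ∏ i ∈ s, (c + m i) ≤ c ^ #s * (1 + t / (#s * c)) ^ #s := by
  have hcm : ∀ i ∈ s, 0 ≤ c + m i := fun i hi => by linarith [hm i hi]
  have hmean : (∑ i ∈ s, (c + m i)) / #s ≤ c * (1 + t / (#s * c)) := by
    rcases s.eq_empty_or_nonempty with rfl | hs
    · simpa using hc.le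
    have hk : (#s : ℝ) ≠ 0 := by simpa using hs.ne_empty
    calc (∑ i ∈ s, (c + m i)) / #s = c + (∑ i ∈ s, m i) / #s := by
          rw [sum_add_distrib, sum_const, nsmul_eq_mul]; field_simp
      _ ≤ c + t / #s := by gcongr
      _ = c * (1 + t / (#s * c)) := by field_simp
  rw [← mul_pow]
  exact (prod_le_sum_div_card_pow s hcm).trans
    (pow_le_pow_left₀ (div_nonneg (sum_nonneg hcm) (by positivity)) hmean _)

theorem Real.le_two_mul_log_one_add {s : ℝ} (h₀ : 0 ≤ s) (h₂ : s ≤ 2) :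
    s ≤ 2 * Real.log (1 + s) := by
  have := Real.le_log_one_add_of_nonneg h₀
  rw [div_le_iff₀ (by linarith)] at this
  nlinarith

theorem Real.sum_sqrt_le_sqrt_card_mul_sum {ι : Type*} (s : Finset ι) {f : ι → ℝ}
    (hf : ∀ i ∈ s, 0 ≤ f i) : ∑ i ∈ s, √(f i) ≤ √(#s * ∑ i ∈ s, f i) := by
  have := Real.sum_mul_le_sqrt_mul_sqrt s 1 fun i => √(f i)
  rw [sum_congr rfl fun i hi => Real.sq_sqrt (hf i hi), ← Real.sqrt_mul (by positivity)] at this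
  simpa using this

/-- The quantity `S_n^{λ₁,λ₂}` of the paper, with `p = rank P`, `q = d - p` and `t = n`. -/
noncomputable def projPotential (p q : ℕ) (l₁ l₂ t : ℝ) : ℝ :=
  p * Real.log (1 + t / (p * l₂)) + q * Real.log (1 + t / (q * l₁))

section

variable {n : Type*} [Fintype n]

theorem sub_dotProduct_le_two_mul_of_ucb {x x' θ θ' : n → ℝ} {w w' : ℝ}
    (hconf : |x ⬝ᵥ (θ' - θ)| ≤ w) (hconf' : |x' ⬝ᵥ (θ' - θ)| ≤ w')
    (hucb : x' ⬝ᵥ θ' + w' ≤ x ⬝ᵥ θ' + w) : (x' - x) ⬝ᵥ θ ≤ 2 * w := by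
  rw [abs_le, dotProduct_sub] at hconf hconf'
  rw [sub_dotProduct]
  linarith [hconf.2, hconf'.1]

theorem Matrix.IsHermitian.posSemidef_of_mul_self {P : Matrix n n ℝ} (hP : P.IsHermitian)
    (hidem : P * P = P) : P.PosSemidef := by
  have := posSemidef_conjTranspose_mul_self P
  rwa [hP.eq, hidem] at this

theorem Matrix.posSemidef_vecMulVec_self (v : n → ℝ) : (vecMulVec v v).PosSemidef := by
  simpa using posSemidef_vecMulVec_self_star v

variable {V : ℕ → Matrix n n ℝ} {y : ℕ → n → ℝ}

theorem Matrix.monotone_of_add_vecMulVec (hV : ∀ k, V (k + 1) = V k + vecMulVec (y k) (y k)) :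
    Monotone V :=
  monotone_nat_of_le_succ fun k => by
    rw [hV k, le_iff, add_sub_cancel_left]
    exact posSemidef_vecMulVec_self _

theorem Matrix.trace_sub_eq_sum_dotProduct (hV : ∀ k, V (k + 1) = V k + vecMulVec (y k) (y k))
    (N : ℕ) : (V N - V 0).trace = ∑ k ∈ range N, y k ⬝ᵥ y k := by
  induction N with
  | zero => simp
  | succ N ih => rw [hV, add_sub_right_comm, trace_add, ih, trace_vecMulVec, sum_range_succ]

end

section

variable {n : Type*} [Fintype n] [DecidableEq n]

theorem Matrix.PosSemidef.det_le_trace_div_card_pow {A : Matrix n n ℝ} (hA : A.PosSemidef) :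
    A.det ≤ (A.trace / Fintype.card n) ^ Fintype.card n := by
  rw [hA.isHermitian.det_eq_prod_eigenvalues, hA.isHermitian.trace_eq_sum_eigenvalues]
  simpa using Real.prod_le_sum_div_card_pow univ fun i _ => hA.eigenvalues_nonneg i

/-- **Hadamard's inequality**. -/
theorem Matrix.PosDef.det_le_prod_diag {A : Matrix n n ℝ} (hA : A.PosDef) :
    A.det ≤ ∏ i, A i i := by
  set r : n → ℝ := fun i => (√(A i i))⁻¹
  have hr : ∀ i, r i * r i * A i i = 1 := fun i => by
    simp only [r, ← mul_inv, Real.mul_self_sqrt hA.diag_pos.le, inv_mul_cancel₀ hA.diag_pos.ne']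
  -- Rescaling `A` to unit diagonal reduces Hadamard to `det ≤ (trace / card) ^ card`.
  have hE : (diagonal r * A * diagonal r).PosSemidef := by
    simpa using hA.posSemidef.conjTranspose_mul_mul_same (diagonal r)
  have htrace : (diagonal r * A * diagonal r).trace = Fintype.card n := by
    simp [trace, diagonal_mul, mul_diagonal, mul_right_comm _ (A _ _), hr]
  have hdet : A.det = (diagonal r * A * diagonal r).det * ∏ i, A i i := by
    have : (∏ i, r i) * (∏ i, r i) * ∏ i, A i i = 1 := by
      simp [← prod_mul_distrib, hr]
    rw [det_mul, det_mul, det_diagonal]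
    linear_combination -A.det * this
  have hE1 : (diagonal r * A * diagonal r).det ≤ 1 := by
    refine hE.det_le_trace_div_card_pow.trans (pow_le_one₀ ?_ ?_) <;> rw [htrace]
    exacts [by positivity, div_self_le_one _]
  rw [hdet]
  exact mul_le_of_le_one_left (prod_nonneg fun i _ => hA.diag_pos.le) hE1

theorem Matrix.det_add_vecMulVec {M : Matrix n n ℝ} (hM : IsUnit M.det) (u v : n → ℝ) :
    (M + vecMulVec u v).det = M.det * (1 + v ⬝ᵥ (M⁻¹ *ᵥ u)) := by
  rw [vecMulVec_eq Unit, det_add_replicateCol_mul_replicateRow hM, det_unique (1 + _),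
    add_apply, one_apply_eq, Matrix.mul_assoc, ← replicateCol_mulVec,
    replicateRow_mul_replicateCol_apply]

theorem Matrix.posDef_of_one_le {m : Type*} [DecidableEq m] {M : Matrix m m ℝ} (h : 1 ≤ M) :
    M.PosDef := by
  simpa using PosDef.posSemidef_add (le_iff.mp h) PosDef.one

theorem Matrix.PosDef.dotProduct_inv_mulVec_nonneg {M : Matrix n n ℝ} (hM : M.PosDef)
    (x : n → ℝ) : 0 ≤ x ⬝ᵥ (M⁻¹ *ᵥ x) := by
  simpa using hM.inv.posSemidef.dotProduct_mulVec_nonneg x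

theorem Matrix.dotProduct_inv_mulVec_le_of_one_le {M : Matrix n n ℝ} (h : 1 ≤ M) (x : n → ℝ) :
    x ⬝ᵥ (M⁻¹ *ᵥ x) ≤ x ⬝ᵥ x := by
  set y := M⁻¹ *ᵥ x
  have hMy : M *ᵥ y = x := by
    simp [y, mulVec_mulVec, mul_nonsing_inv _ (posDef_of_one_le h).det_pos.ne'.isUnit]
  -- With `t = xᵀM⁻¹x = yᵀMy ≥ yᵀy`, expanding `0 ≤ |x - y|²` gives `t ≤ 2t - yᵀy ≤ xᵀx`.
  have hyy : y ⬝ᵥ y ≤ x ⬝ᵥ y := by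
    have := (le_iff.mp h).dotProduct_mulVec_nonneg y
    simpa [sub_mulVec, hMy, dotProduct_comm y x] using this
  have hxy : 0 ≤ (x - y) ⬝ᵥ (x - y) := by
    simpa using (PosSemidef.one (n := n) (R := ℝ)).dotProduct_mulVec_nonneg (x - y)
  simp only [sub_dotProduct, dotProduct_sub, dotProduct_comm y x] at hxy
  linarith

section EllipticalPotential

variable {V : ℕ → Matrix n n ℝ} {y : ℕ → n → ℝ}

theorem Matrix.det_eq_det_mul_prod_one_add (hV : ∀ k, V (k + 1) = V k + vecMulVec (y k) (y k))
    (hdet : ∀ k, IsUnit (V k).det) (N : ℕ) :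
    (V N).det = (V 0).det * ∏ k ∈ range N, (1 + y k ⬝ᵥ ((V k)⁻¹ *ᵥ y k)) := by
  induction N with
  | zero => simp
  | succ N ih => rw [hV, det_add_vecMulVec (hdet N), ih, prod_range_succ, mul_assoc]

/-- The **elliptical potential lemma**. -/
theorem Matrix.sum_dotProduct_inv_mulVec_le_two_mul_log_det_s11
    (hV : ∀ k, V (k + 1) = V k + vecMulVec (y k) (y k)) (h₁ : 1 ≤ V 0) {N : ℕ}
    (hy : ∀ k ∈ range N, y k ⬝ᵥ y k ≤ 1) :
    ∑ k ∈ range N, y k ⬝ᵥ ((V k)⁻¹ *ᵥ y k) ≤ 2 * Real.log ((V N).det / (V 0).det) := by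
  have hV₁ (k : ℕ) : 1 ≤ V k := h₁.trans (monotone_of_add_vecMulVec hV (Nat.zero_le k))
  have hv₀ (k : ℕ) := (posDef_of_one_le (hV₁ k)).dotProduct_inv_mulVec_nonneg (y k)
  rw [det_eq_det_mul_prod_one_add hV (fun k => (posDef_of_one_le (hV₁ k)).det_pos.ne'.isUnit),
    mul_div_cancel_left₀ _ (posDef_of_one_le h₁).det_pos.ne',
    Real.log_prod fun k _ => by linarith [hv₀ k], mul_sum]
  refine sum_le_sum fun k hk => Real.le_two_mul_log_one_add (hv₀ k) ?_
  linarith [dotProduct_inv_mulVec_le_of_one_le (hV₁ k) (y k), hy k hk]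

end EllipticalPotential

section Projection

variable {P : Matrix n n ℝ}

theorem Matrix.one_le_smul_one_sub_add_smul (hP : P.IsHermitian) (hidem : P * P = P)
    {l₁ l₂ : ℝ} (hl₁ : 1 ≤ l₁) (hl₂ : 1 ≤ l₂) : 1 ≤ l₁ • (1 - P) + l₂ • P := by
  have hQ : (1 - P).IsHermitian := isHermitian_one.sub hP
  have hQidem : (1 - P) * (1 - P) = 1 - P := by
    simp only [Matrix.sub_mul, Matrix.mul_sub, Matrix.one_mul, Matrix.mul_one, hidem, sub_self,
      sub_zero]
  have : l₁ • (1 - P) + l₂ • P - 1 = (l₁ - 1) • (1 - P) + (l₂ - 1) • P := by module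
  rw [le_iff, this]
  exact ((hQ.posSemidef_of_mul_self hQidem).smul (by linarith)).add
    ((hP.posSemidef_of_mul_self hidem).smul (by linarith))

theorem Matrix.IsHermitian.exists_unitary_conj_eq_diagonal_of_mul_self
    (hP : P.IsHermitian) (hidem : P * P = P) :
    ∃ U ∈ unitaryGroup n ℝ, ∃ S : Finset n, #S = P.rank ∧
      star U * P * U = diagonal fun i => if i ∈ S then 1 else 0 := by
  set U := (hP.eigenvectorUnitary : Matrix n n ℝ)
  set μ := hP.eigenvalues
  have hspec : star U * P * U = diagonal μ := by
    simpa [Unitary.conjStarAlgAut_star_apply] using hP.conjStarAlgAut_star_eigenvectorUnitary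
  have hμ : ∀ i, μ i * μ i = μ i := fun i => by
    have hD : diagonal μ * diagonal μ = diagonal μ := by
      rw [← hspec]
      calc star U * P * U * (star U * P * U) = star U * (P * (U * star U) * P) * U := by
            simp only [Matrix.mul_assoc]
        _ = star U * P * U := by
            rw [mem_unitaryGroup_iff.mp hP.eigenvectorUnitary.2, Matrix.mul_one, hidem,
              Matrix.mul_assoc]
    simpa using congrFun (congrFun hD i) i
  refine ⟨U, hP.eigenvectorUnitary.2, univ.filter (μ · ≠ 0), ?_, ?_⟩
  · rw [hP.rank_eq_card_non_zero_eigs, Fintype.card_subtype]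
  · rw [hspec]
    congr 1
    funext i
    by_cases h : μ i = 0
    · simp [h]
    · simpa [h] using mul_right_cancel₀ h ((hμ i).trans (one_mul _).symm)

theorem Matrix.det_star_mul_mul_of_mem_unitaryGroup {U : Matrix n n ℝ}
    (hU : U ∈ unitaryGroup n ℝ) (A : Matrix n n ℝ) : (star U * A * U).det = A.det := by
  rw [det_mul, det_mul, mul_right_comm, ← det_mul, mem_unitaryGroup_iff'.mp hU, det_one, one_mul]

theorem Matrix.star_mul_smul_one_sub_add_smul_mul {U : Matrix n n ℝ}
    (hU : U ∈ unitaryGroup n ℝ) {S : Finset n}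
    (hPU : star U * P * U = diagonal fun i => if i ∈ S then 1 else 0) (l₁ l₂ : ℝ) :
    star U * (l₁ • (1 - P) + l₂ • P) * U = diagonal fun i => if i ∈ S then l₂ else l₁ := by
  simp only [Matrix.mul_add, Matrix.add_mul, Matrix.mul_smul, Matrix.smul_mul, Matrix.mul_sub,
    Matrix.sub_mul, Matrix.mul_one, mem_unitaryGroup_iff'.mp hU, hPU]
  ext i j
  obtain rfl | hij := eq_or_ne i j
  · by_cases hi : i ∈ S <;> simp [hi]
  · simp [hij]

theorem Matrix.det_smul_one_sub_add_smul_add_le (hP : P.IsHermitian) (hidem : P * P = P)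
    {X : Matrix n n ℝ} {l₁ l₂ t : ℝ} (hl₁ : 0 < l₁) (hl₂ : 0 < l₂) (hX : X.PosSemidef)
    (ht : X.trace ≤ t) :
    (l₁ • (1 - P) + l₂ • P + X).det ≤ (l₁ • (1 - P) + l₂ • P).det *
      ((1 + t / (P.rank * l₂)) ^ P.rank *
        (1 + t / ((Fintype.card n - P.rank : ℕ) * l₁)) ^ (Fintype.card n - P.rank)) := by
  obtain ⟨U, hU, S, hS, hPU⟩ := hP.exists_unitary_conj_eq_diagonal_of_mul_self hidem
  set c : n → ℝ := fun i => if i ∈ S then l₂ else l₁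
  have hc := star_mul_smul_one_sub_add_smul_mul hU hPU l₁ l₂
  set M := star U * X * U
  have hM : M.PosSemidef := by
    have := hX.conjTranspose_mul_mul_same U
    rwa [← star_eq_conjTranspose] at this
  have hMt : ∀ s : Finset n, ∑ i ∈ s, M i i ≤ t := fun s =>
    calc ∑ i ∈ s, M i i ≤ M.trace := sum_le_univ_sum_of_nonneg fun i => hM.diag_nonneg
      _ = X.trace := by rw [trace_mul_cycle, mem_unitaryGroup_iff.mp hU, Matrix.one_mul]
      _ ≤ t := ht
  have hpd : (diagonal c + M).PosDef :=
    (PosDef.diagonal fun i => by by_cases hi : i ∈ S <;> simp [c, hi, hl₁, hl₂]).add_posSemidef hM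
  have hsplit (g : n → ℝ) : ∏ i, g i = (∏ i ∈ S, g i) * ∏ i ∈ Sᶜ, g i :=
    (prod_mul_prod_compl S g).symm
  rw [← det_star_mul_mul_of_mem_unitaryGroup hU, Matrix.mul_add, Matrix.add_mul, hc,
    ← det_star_mul_mul_of_mem_unitaryGroup hU (l₁ • (1 - P) + l₂ • P), hc, det_diagonal,
    hsplit, ← hS, ← card_compl]
  calc (diagonal c + M).det ≤ ∏ i, (c i + M i i) := by
        simpa using hpd.det_le_prod_diag
    _ = (∏ i ∈ S, (l₂ + M i i)) * ∏ i ∈ Sᶜ, (l₁ + M i i) := by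
        rw [hsplit]
        congr 1 <;> refine prod_congr rfl fun i hi => ?_ <;> simp_all [c]
    _ ≤ l₂ ^ #S * (1 + t / (#S * l₂)) ^ #S * (l₁ ^ #Sᶜ * (1 + t / (#Sᶜ * l₁)) ^ #Sᶜ) := by
        refine mul_le_mul ?_ ?_ (prod_nonneg fun i _ => ?_) ?_
        · exact Real.prod_add_le_pow_mul_one_add_div_pow _ hl₂ (fun i _ => hM.diag_nonneg) (hMt S)
        · exact Real.prod_add_le_pow_mul_one_add_div_pow _ hl₁ (fun i _ => hM.diag_nonneg) (hMt _)
        · linarith [hM.diag_nonneg (i := i)]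
        · have := hX.trace_nonneg.trans ht
          positivity
    _ = _ := by
        rw [prod_congr rfl fun i hi => if_pos hi,
          prod_congr rfl fun i hi => if_neg (mem_compl.mp hi), prod_const, prod_const]
        ring

theorem Matrix.sum_dotProduct_inv_mulVec_le_two_mul_projPotential (hP : P.IsHermitian)
    (hidem : P * P = P) {l₁ l₂ : ℝ} (hl₁ : 1 ≤ l₁) (hl₂ : 1 ≤ l₂) {V : ℕ → Matrix n n ℝ}
    {y : ℕ → n → ℝ} (hV₀ : V 0 = l₁ • (1 - P) + l₂ • P)
    (hV : ∀ k, V (k + 1) = V k + vecMulVec (y k) (y k)) {N : ℕ}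
    (hy : ∀ k ∈ range N, y k ⬝ᵥ y k ≤ 1) :
    ∑ k ∈ range N, y k ⬝ᵥ ((V k)⁻¹ *ᵥ y k) ≤
      2 * projPotential P.rank (Fintype.card n - P.rank) l₁ l₂ N := by
  have hV₁ : 1 ≤ V 0 := hV₀ ▸ one_le_smul_one_sub_add_smul hP hidem hl₁ hl₂
  have hmono := monotone_of_add_vecMulVec hV
  have hdet := det_smul_one_sub_add_smul_add_le hP hidem (zero_lt_one.trans_le hl₁)
    (zero_lt_one.trans_le hl₂) (le_iff.mp (hmono (Nat.zero_le N))) (t := N)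
    (by simpa [trace_sub_eq_sum_dotProduct hV] using sum_le_sum hy)
  rw [← hV₀, add_sub_cancel, ← div_le_iff₀' (posDef_of_one_le hV₁).det_pos] at hdet
  refine (sum_dotProduct_inv_mulVec_le_two_mul_log_det_s11 hV hV₁ hy).trans ?_
  grw [Real.log_le_log (div_pos (posDef_of_one_le (hV₁.trans (hmono (Nat.zero_le N)))).det_pos
    (posDef_of_one_le hV₁).det_pos) hdet]
  rw [Real.log_mul (by positivity) (by positivity), Real.log_pow, Real.log_pow, projPotential]

end Projection

end

theorem projected_linucb_regret_general {ι : Type*} (d p n : ℕ)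
    (P : Matrix (Fin d) (Fin d) ℝ) (hsymm : Pᵀ = P) (hidem : P * P = P)
    (hrank : P.rank = p)
    (l1 l2 : ℝ) (hl1 : 1 ≤ l1) (hl2 : 1 ≤ l2)
    (γ : ℝ) (hγ : 0 ≤ γ) (θstar : Fin d → ℝ)
    (A : ℕ → Finset ι)
    (x : ι → Fin d → ℝ)
    (hxnorm : ∀ k ∈ Finset.range n, ∀ b ∈ A (k + 1), Real.sqrt (x b ⬝ᵥ x b) ≤ 1)
    (a : ℕ → ι) (ha : ∀ k ∈ Finset.range n, a (k + 1) ∈ A (k + 1))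
    (B : ℕ → Matrix (Fin d) (Fin d) ℝ)
    (hB0 : B 0 = l1 • ((1 : Matrix (Fin d) (Fin d) ℝ) - P) + l2 • P)
    (hBs : ∀ k : ℕ, B (k + 1) = B k + vecMulVec (x (a (k + 1))) (x (a (k + 1))))
    (θhat : ℕ → Fin d → ℝ)
    (hconf : ∀ k ∈ Finset.range n, ∀ b ∈ A (k + 1),
      |x b ⬝ᵥ (θhat k - θstar)| ≤ γ * Real.sqrt (x b ⬝ᵥ ((B k)⁻¹ *ᵥ x b)))
    (hucb : ∀ k ∈ Finset.range n, ∀ b ∈ A (k + 1),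
      x b ⬝ᵥ θhat k + γ * Real.sqrt (x b ⬝ᵥ ((B k)⁻¹ *ᵥ x b))
        ≤ x (a (k + 1)) ⬝ᵥ θhat k
          + γ * Real.sqrt (x (a (k + 1)) ⬝ᵥ ((B k)⁻¹ *ᵥ x (a (k + 1)))))
    (astar : ℕ → ι)
    (hastar : ∀ k ∈ Finset.range n, astar (k + 1) ∈ A (k + 1)) :
    ∑ k ∈ Finset.range n, (x (astar (k + 1)) - x (a (k + 1))) ⬝ᵥ θstar
      ≤ 2 * γ * Real.sqrt (2 * (n : ℝ)
          * ((p : ℝ) * Real.log (1 + (n : ℝ) / ((p : ℝ) * l2))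
            + ((d - p : ℕ) : ℝ) * Real.log (1 + (n : ℝ) / (((d - p : ℕ) : ℝ) * l1)))) := by
  have hP : P.IsHermitian := isHermitian_iff_isSymm.mpr hsymm
  have hB (k : ℕ) : 1 ≤ B k := (hB0 ▸ one_le_smul_one_sub_add_smul hP hidem hl1 hl2).trans
    (monotone_of_add_vecMulVec hBs (Nat.zero_le k))
  have hpot := sum_dotProduct_inv_mulVec_le_two_mul_projPotential hP hidem hl1 hl2 hB0 hBs
    fun k hk => Real.sqrt_le_one.mp (hxnorm k hk _ (ha k hk))
  rw [hrank, Fintype.card_fin, projPotential] at hpot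
  calc ∑ k ∈ range n, (x (astar (k + 1)) - x (a (k + 1))) ⬝ᵥ θstar
      ≤ ∑ k ∈ range n, 2 * (γ * √(x (a (k + 1)) ⬝ᵥ ((B k)⁻¹ *ᵥ x (a (k + 1))))) :=
        sum_le_sum fun k hk => sub_dotProduct_le_two_mul_of_ucb (hconf k hk _ (ha k hk))
          (hconf k hk _ (hastar k hk)) (hucb k hk _ (hastar k hk))
    _ ≤ 2 * γ * √(n * ∑ k ∈ range n, x (a (k + 1)) ⬝ᵥ ((B k)⁻¹ *ᵥ x (a (k + 1)))) := by
        simp only [← mul_sum, ← mul_assoc]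
        gcongr
        simpa using Real.sum_sqrt_le_sqrt_card_mul_sum (range n) fun k _ =>
          (posDef_of_one_le (hB k)).dotProduct_inv_mulVec_nonneg _
    _ ≤ _ := by
        gcongr 2 * γ * √?_
        linarith [mul_le_mul_of_nonneg_left hpot (Nat.cast_nonneg (α := ℝ) n)]

/-- Deterministic core of Theorem 1: cumulative pseudo-regret of projected LinUCB
is at most 2γ·√(2n·S_n^{λ₁,λ₂}). -/
theorem projected_linucb_regret {ι : Type*} (d p n : ℕ) (hp1 : 1 ≤ p) (hpd : p ≤ d - 1)
    (P : Matrix (Fin d) (Fin d) ℝ) (hsymm : Pᵀ = P) (hidem : P * P = P)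
    (hrank : P.rank = p)
    (l1 l2 : ℝ) (hl1 : 1 ≤ l1) (hl2 : 1 ≤ l2)
    (γ : ℝ) (hγ : 0 ≤ γ) (θstar : Fin d → ℝ)
    (A : ℕ → Finset ι) (hA : ∀ k, (A k).Nonempty)
    (x : ι → Fin d → ℝ)
    (hxnorm : ∀ k ∈ Finset.range n, ∀ b ∈ A (k + 1), Real.sqrt (x b ⬝ᵥ x b) ≤ 1)
    (a : ℕ → ι) (ha : ∀ k ∈ Finset.range n, a (k + 1) ∈ A (k + 1))
    (B : ℕ → Matrix (Fin d) (Fin d) ℝ)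
    (hB0 : B 0 = l1 • ((1 : Matrix (Fin d) (Fin d) ℝ) - P) + l2 • P)
    (hBs : ∀ k : ℕ, B (k + 1) = B k + vecMulVec (x (a (k + 1))) (x (a (k + 1))))
    (θhat : ℕ → Fin d → ℝ)
    (hconf : ∀ k ∈ Finset.range n, ∀ b ∈ A (k + 1),
      |x b ⬝ᵥ (θhat k - θstar)| ≤ γ * Real.sqrt (x b ⬝ᵥ ((B k)⁻¹ *ᵥ x b)))
    (hucb : ∀ k ∈ Finset.range n, ∀ b ∈ A (k + 1),
      x b ⬝ᵥ θhat k + γ * Real.sqrt (x b ⬝ᵥ ((B k)⁻¹ *ᵥ x b))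
        ≤ x (a (k + 1)) ⬝ᵥ θhat k
          + γ * Real.sqrt (x (a (k + 1)) ⬝ᵥ ((B k)⁻¹ *ᵥ x (a (k + 1)))))
    (astar : ℕ → ι)
    (hastar : ∀ k ∈ Finset.range n, astar (k + 1) ∈ A (k + 1))
    (hopt : ∀ k ∈ Finset.range n, ∀ b ∈ A (k + 1),
      x b ⬝ᵥ θstar ≤ x (astar (k + 1)) ⬝ᵥ θstar) :
    ∑ k ∈ Finset.range n, (x (astar (k + 1)) - x (a (k + 1))) ⬝ᵥ θstar
      ≤ 2 * γ * Real.sqrt (2 * (n : ℝ)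
          * ((p : ℝ) * Real.log (1 + (n : ℝ) / ((p : ℝ) * l2))
            + ((d - p : ℕ) : ℝ) * Real.log (1 + (n : ℝ) / (((d - p : ℕ) : ℝ) * l1)))) :=
  projected_linucb_regret_general d p n P hsymm hidem hrank l1 l2 hl1 hl2 γ hγ θstar A x hxnorm a ha
    B hB0 hBs θhat hconf hucb astar hastar
end
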